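/- Let a > 0 and define for κ ≥ 0 the function f(κ) = 1 − κ·tanh(κa/2) and g(κ) = 1 − κ/tanh(κa/2) (with g(0) := 1 − 2/a). Then: f has a unique positive zero ν; if additionally 1 − 2/a > 0 then g has a unique positive zero η; and in that case η < ν. Hence the operator −Δ(𝟙,𝟙) on the interval [0,a] has negative eigenvalues −ν² and −η², and −ν² < −η². -/

import Mathlib

/-!
Both `κ ↦ κ tanh (κ a / 2)` and `κ ↦ κ / tanh (κ a / 2)` are strictly increasing on
`(0, ∞)`; for the second this is the monotonicity of `s ↦ s coth s`, whose derivative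
`(sinh s cosh s - s) / sinh² s` is positive because `sinh (2 s) > 2 s`. Uniqueness follows, and
existence is the intermediate value theorem; for `η` the small end uses `s coth s < exp s`,
which brings the value below `1` once `a > 2`. Finally `tanh < 1` gives
`η tanh (η a / 2) < η / tanh (η a / 2) = 1 = ν tanh (ν a / 2)`, so `η < ν`.
-/

open Set Filter

theorem StrictMonoOn.existsUnique_of_exists {α β : Type*} [LinearOrder α] [Preorder β]
    {f : α → β} {s : Set α} {y : β} (hf : StrictMonoOn f s) (h : ∃ x, x ∈ s ∧ f x = y) :
    ∃! x, x ∈ s ∧ f x = y := by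
  obtain ⟨x, hx, hxy⟩ := h
  exact ⟨x, ⟨hx, hxy⟩, fun z ⟨hz, hzy⟩ => hf.injOn hz hx (hzy.trans hxy.symm)⟩

namespace Real

theorem tanh_strictMono : StrictMono tanh := fun x y hxy => by
  rwa [← artanh_lt_artanh_iff ⟨neg_one_lt_tanh x, tanh_lt_one x⟩
    ⟨neg_one_lt_tanh y, tanh_lt_one y⟩, artanh_tanh, artanh_tanh]

theorem tanh_pos {x : ℝ} (hx : 0 < x) : 0 < tanh x := by
  simpa using tanh_strictMono hx

theorem continuous_tanh : Continuous tanh := by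
  simp_rw [funext tanh_eq_sinh_div_cosh]
  exact continuous_sinh.div continuous_cosh fun x => (cosh_pos x).ne'

theorem mul_tanh_lt_div_tanh {x y : ℝ} (hx : 0 < x) (hy : 0 < y) : x * tanh y < x / tanh y := by
  have ht := tanh_pos hy
  rw [lt_div_iff₀ ht, mul_assoc]
  exact mul_lt_of_lt_one_right hx (by nlinarith [tanh_lt_one y])

theorem strictMonoOn_div_tanh : StrictMonoOn (fun s => s / tanh s) (Ioi 0) := by
  have hsinh : ∀ s ∈ Ioi (0 : ℝ), sinh s ≠ 0 := fun s hs => (sinh_pos_iff.2 hs).ne'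
  simp_rw [tanh_eq_sinh_div_cosh, div_div_eq_mul_div]
  refine strictMonoOn_of_deriv_pos (convex_Ioi 0)
    ((continuous_id.mul continuous_cosh).continuousOn.div continuous_sinh.continuousOn hsinh)
    fun s hs => ?_
  rw [interior_Ioi] at hs
  have hd : HasDerivAt (fun s => s * cosh s / sinh s) ((sinh s * cosh s - s) / sinh s ^ 2) s := by
    refine (((hasDerivAt_id' s).mul (hasDerivAt_cosh s)).div (hasDerivAt_sinh s)
      (hsinh s hs)).congr_deriv ?_
    simp only [Pi.mul_apply]
    congr 1
    linear_combination -s * cosh_sq s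
  rw [hd.deriv]
  have h2 : 2 * s < sinh (2 * s) := self_lt_sinh_iff.2 (by linarith [hs.out])
  rw [sinh_two_mul] at h2
  exact div_pos (by linarith) (pow_pos (sinh_pos_iff.2 hs) 2)

theorem div_tanh_lt_exp {s : ℝ} (hs : 0 < s) : s / tanh s < exp s := by
  have hsinh := sinh_pos_iff.2 hs
  rw [tanh_eq_sinh_div_cosh, div_div_eq_mul_div, ← cosh_add_sinh]
  calc s * cosh s / sinh s ≤ cosh s := by
        rw [div_le_iff₀ hsinh, mul_comm]
        exact mul_le_mul_of_nonneg_left (self_le_sinh_iff.2 hs.le) (cosh_pos s).le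
    _ < cosh s + sinh s := lt_add_of_pos_right _ hsinh

end Real

open Real

section Rescaled

variable {c : ℝ}

theorem strictMonoOn_mul_tanh_mul (hc : 0 < c) :
    StrictMonoOn (fun x => x * tanh (x * c)) (Ici 0) := by
  intro x hx y hy hxy
  have hx' : 0 ≤ x * c := mul_nonneg hx hc.le
  exact mul_lt_mul'' hxy (tanh_strictMono (by gcongr)) hx
    (by simpa using tanh_strictMono.monotone hx')

theorem strictMonoOn_div_tanh_mul (hc : 0 < c) :
    StrictMonoOn (fun x => x / tanh (x * c)) (Ioi 0) := by
  intro x hx y hy hxy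
  have key := strictMonoOn_div_tanh (mul_pos hx hc) (mul_pos hy hc)
    (mul_lt_mul_of_pos_right hxy hc)
  simp only [mul_div_right_comm _ c] at key
  exact lt_of_mul_lt_mul_right key hc.le

theorem exists_pos_mul_tanh_mul_eq_one (hc : 0 < c) : ∃ x, 0 < x ∧ x * tanh (x * c) = 1 := by
  have hcont : ContinuousOn (fun x => x * tanh (x * c)) (Ici 0) :=
    (continuous_id.mul (continuous_tanh.comp (continuous_id.mul continuous_const))).continuousOn
  have htop : Tendsto (fun x => x * tanh (x * c)) atTop atTop := by
    refine tendsto_atTop_mono' atTop ?_ (tendsto_id.atTop_mul_const (tanh_pos hc))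
    filter_upwards [eventually_ge_atTop 1] with x hx
    exact mul_le_mul_of_nonneg_left (tanh_strictMono.monotone (le_mul_of_one_le_left hc.le hx))
      (zero_le_one.trans hx)
  obtain ⟨x, hx, hx1⟩ :=
    intermediate_value_Ici hcont htop (show (1 : ℝ) ∈ Ici (0 * tanh (0 * c)) by simp)
  refine ⟨x, lt_of_le_of_ne hx ?_, hx1⟩
  rintro rfl
  simp at hx1

theorem exists_pos_div_tanh_mul_eq_one (hc : 1 < c) : ∃ x, 0 < x ∧ x / tanh (x * c) = 1 := by
  have hc0 : 0 < c := by linarith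
  have hlog : 0 < log c := log_pos hc
  -- at `x₀ = log c / c` the value is below `exp (log c) / c = 1` by `div_tanh_lt_exp`
  set x₀ := log c / c with hx₀
  have hx₀pos : 0 < x₀ := div_pos hlog hc0
  have hx₀c : x₀ * c = log c := div_mul_cancel₀ _ hc0.ne'
  have hlow : x₀ / tanh (x₀ * c) ≤ 1 := by
    rw [hx₀c, hx₀, div_right_comm, div_le_one hc0]
    exact (div_tanh_lt_exp hlog).le.trans (exp_log hc0).le
  have hcont : ContinuousOn (fun x => x / tanh (x * c)) (Ici x₀) :=
    continuousOn_id.div (continuous_tanh.comp (continuous_id.mul continuous_const)).continuousOn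
      fun x hx => (tanh_pos (mul_pos (hx₀pos.trans_le hx) hc0)).ne'
  have htop : Tendsto (fun x => x / tanh (x * c)) atTop atTop := by
    refine tendsto_atTop_mono' atTop ?_ tendsto_id
    filter_upwards [eventually_gt_atTop 0] with x hx
    exact le_div_self hx.le (tanh_pos (mul_pos hx hc0)) (tanh_lt_one _).le
  obtain ⟨x, hx, hx1⟩ := intermediate_value_Ici hcont htop hlow
  exact ⟨x, hx₀pos.trans_le hx, hx1⟩

end Rescaled

theorem stmt14 (a : ℝ) (ha : 0 < a) :
    (∃! ν : ℝ, 0 < ν ∧ 1 - ν * Real.tanh (ν * a / 2) = 0) ∧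
    (0 < 1 - 2 / a →
      (∃! η : ℝ, 0 < η ∧ 1 - η / Real.tanh (η * a / 2) = 0) ∧
      ∀ ν η : ℝ, 0 < ν → 1 - ν * Real.tanh (ν * a / 2) = 0 →
        0 < η → 1 - η / Real.tanh (η * a / 2) = 0 →
        η < ν ∧ -ν ^ 2 < -η ^ 2) := by
  have hc : 0 < a / 2 := half_pos ha
  have hF := strictMonoOn_mul_tanh_mul hc
  simp only [mul_div_assoc, sub_eq_zero, eq_comm (a := (1 : ℝ))]
  refine ⟨(hF.mono Ioi_subset_Ici_self).existsUnique_of_exists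
    (exists_pos_mul_tanh_mul_eq_one hc), fun h2a => ⟨?_, fun ν η hν hνeq hη hηeq => ?_⟩⟩
  · have hc1 : 1 < a / 2 := by
      rw [sub_pos, div_lt_one ha] at h2a
      linarith
    exact (strictMonoOn_div_tanh_mul hc).existsUnique_of_exists
      (exists_pos_div_tanh_mul_eq_one hc1)
  · have hlt : η < ν := (hF.lt_iff_lt hη.le hν.le).1 <|
      calc η * tanh (η * (a / 2)) < η / tanh (η * (a / 2)) :=
            mul_tanh_lt_div_tanh hη (mul_pos hη hc)
        _ = ν * tanh (ν * (a / 2)) := hηeq.trans hνeq.symm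
    exact ⟨hlt, neg_lt_neg (pow_lt_pow_left₀ hlt hη.le two_ne_zero)⟩
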